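/- (Power-scaling Case II) If α = 1, 0 < ε < 1 and γ > 0, then lim_{M→∞} R̃_i(M) = λ·log₂(1 + E_u·(ψ_{AR,i}² + ψ_{BR,i}²)/(ψ_{AR,i} + ψ_{BR,i})); that is, the asymptotic spectral efficiency is determined by the uplink phase and is independent of E_r. -/

import Mathlib

open Real Filter Topology Finset

noncomputable section

/-- `η = τ·p_p·β/(1+τ·p_p·β)`. -/
def etaP (τ pp β : ℝ) : ℝ := τ * pp * β / (1 + τ * pp * β)

/-- `ω = β(K+η)/(K+1)`. -/
def omegaP (τ pp β K : ℝ) : ℝ := β * (K + etaP τ pp β) / (K + 1)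

/-- `σ² = β/((1+τ·p_p·β)(K+1))`. -/
def sigma2P (τ pp β K : ℝ) : ℝ := β / ((1 + τ * pp * β) * (K + 1))

/-- Generic interference coefficient: with `(b₁,k₁)` and `(b₂,k₂)` the two links involved,
`b₁·b₂/((k₁+1)(k₂+1))·[(k₁+η₁)/(1+τ·p_p·b₂) + k₂·η₁ + k₁·η₂ + η₁·η₂]`.
It specializes to `ξ_{XR,ij}`, `χ_{XR,ij}` and `ζ_{XR,ij}` of (25)–(27). -/
def xiP (τ pp b1 k1 b2 k2 : ℝ) : ℝ :=
  b1 * b2 / ((k1 + 1) * (k2 + 1)) *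
    ((k1 + etaP τ pp b1) / (1 + τ * pp * b2) + k2 * etaP τ pp b1
      + k1 * etaP τ pp b2 + etaP τ pp b1 * etaP τ pp b2)

variable {N : ℕ}

/-- `q_i = p_u σ²_{AR,i} + p_u σ²_{BR,i} + 1`. -/
def qP (τ pp pu : ℝ) (βA βB KA KB : Fin N → ℝ) (i : Fin N) : ℝ :=
  pu * sigma2P τ pp (βA i) (KA i) + pu * sigma2P τ pp (βB i) (KB i) + 1

/-- `Q_i = Σ_{j≠i} p_u·(ξ_{AR,ij}+ξ_{BR,ij}+χ_{AR,ij}+χ_{BR,ij})`. -/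
def QP (τ pp pu : ℝ) (βA βB KA KB : Fin N → ℝ) (i : Fin N) : ℝ :=
  ∑ j ∈ Finset.univ \ {i},
    pu * (xiP τ pp (βA i) (KA i) (βA j) (KA j) + xiP τ pp (βB i) (KB i) (βA j) (KA j)
      + xiP τ pp (βA i) (KA i) (βB j) (KB j) + xiP τ pp (βB i) (KB i) (βB j) (KB j))

/-- `Z_{ij} = p_r·(ζ_{AR,ij}+ζ_{BR,ij})`. -/
def ZP (τ pp pr : ℝ) (βA βB KA KB : Fin N → ℝ) (i j : Fin N) : ℝ :=
  pr * (xiP τ pp (βA j) (KA j) (βA i) (KA i) + xiP τ pp (βB j) (KB j) (βA i) (KA i))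

/-- `R̃_{1,i}(M)` of Theorem 1 (uplink phase). -/
def R1P (lam τ pp pu : ℝ) (βA βB KA KB : Fin N → ℝ) (i : Fin N) (M : ℝ) : ℝ :=
  lam * logb 2 (1 +
    (M * pu * (omegaP τ pp (βA i) (KA i)) ^ 2 + M * pu * (omegaP τ pp (βB i) (KB i)) ^ 2)
      / ((omegaP τ pp (βA i) (KA i) + omegaP τ pp (βB i) (KB i)) * qP τ pp pu βA βB KA KB i
          + QP τ pp pu βA βB KA KB i))

/-- `R̃_{AR,i}(M)` of Theorem 1. -/
def RARP (lam τ pp pu : ℝ) (βA βB KA KB : Fin N → ℝ) (i : Fin N) (M : ℝ) : ℝ :=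
  lam * logb 2 (1 + M * pu * (omegaP τ pp (βA i) (KA i)) ^ 2
      / ((omegaP τ pp (βA i) (KA i) + omegaP τ pp (βB i) (KB i)) * qP τ pp pu βA βB KA KB i
          + QP τ pp pu βA βB KA KB i))

/-- `R̃_{BR,i}(M)` of Theorem 1. -/
def RBRP (lam τ pp pu : ℝ) (βA βB KA KB : Fin N → ℝ) (i : Fin N) (M : ℝ) : ℝ :=
  lam * logb 2 (1 + M * pu * (omegaP τ pp (βB i) (KB i)) ^ 2
      / ((omegaP τ pp (βA i) (KA i) + omegaP τ pp (βB i) (KB i)) * qP τ pp pu βA βB KA KB i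
          + QP τ pp pu βA βB KA KB i))

/-- `R̃_{RA,i}(M)` of Theorem 1 (downlink to `U_{A,i}`). -/
def RRAP (lam τ pp pr : ℝ) (βA βB KA KB : Fin N → ℝ) (i : Fin N) (M : ℝ) : ℝ :=
  lam * logb 2 (1 + M * pr * (omegaP τ pp (βA i) (KA i)) ^ 2
      / (∑ j, (omegaP τ pp (βA j) (KA j) + omegaP τ pp (βB j) (KB j)
          + ZP τ pp pr βA βB KA KB i j)))

/-- `R̃_{RB,i}(M)` of Theorem 1 (downlink to `U_{B,i}`). -/
def RRBP (lam τ pp pr : ℝ) (βA βB KA KB : Fin N → ℝ) (i : Fin N) (M : ℝ) : ℝ :=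
  lam * logb 2 (1 + M * pr * (omegaP τ pp (βB i) (KB i)) ^ 2
      / (∑ j, (omegaP τ pp (βA j) (KA j) + omegaP τ pp (βB j) (KB j)
          + ZP τ pp pr βA βB KA KB i j)))

/-- `R̃_{2,i}(M) = min(R̃_{AR,i}, R̃_{RB,i}) + min(R̃_{BR,i}, R̃_{RA,i})`. -/
def R2P (lam τ pp pu pr : ℝ) (βA βB KA KB : Fin N → ℝ) (i : Fin N) (M : ℝ) : ℝ :=
  min (RARP lam τ pp pu βA βB KA KB i M) (RRBP lam τ pp pr βA βB KA KB i M)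
    + min (RBRP lam τ pp pu βA βB KA KB i M) (RRAP lam τ pp pr βA βB KA KB i M)

/-- `R̃_i(M) = min(R̃_{1,i}(M), R̃_{2,i}(M))`. -/
def RtotP (lam τ pp pu pr : ℝ) (βA βB KA KB : Fin N → ℝ) (i : Fin N) (M : ℝ) : ℝ :=
  min (R1P lam τ pp pu βA βB KA KB i M) (R2P lam τ pp pu pr βA βB KA KB i M)

end

/-!
As `M → ∞` all three powers tend to `0`, so `η → 0`: then `ω → ψ`, `q_i → 1` and the
interference terms `Q_i`, `Z_{ij}` vanish. Since `α = 1`, `M·p_u = E_u` and the uplink SINRs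
converge to `E_u ψ²/(ψ_{AR,i} + ψ_{BR,i})`, while `M·p_r = E_r M^{1-ε} → ∞` makes the downlink
rates diverge. So each `min` in `R̃_{2,i}` picks the uplink rate, and `R̃_{1,i}` wins the outer
`min` in the limit because `log(1 + a + b) ≤ log(1 + a) + log(1 + b)`.
-/

noncomputable def psiP (β K : ℝ) : ℝ := β * K / (K + 1)

lemma psiP_pos {β K : ℝ} (hβ : 0 < β) (hK : 0 < K) : 0 < psiP β K :=
  div_pos (mul_pos hβ hK) (by linarith)

theorem Filter.Tendsto.min_of_tendsto_atTop {ι α : Type*} [TopologicalSpace α] [LinearOrder α]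
    [OrderTopology α] [NoMaxOrder α] {l : Filter ι} {f g : ι → α} {a : α}
    (hf : Tendsto f l (𝓝 a)) (hg : Tendsto g l atTop) :
    Tendsto (fun x => min (f x) (g x)) l (𝓝 a) := by
  obtain ⟨b, hab⟩ := exists_gt a
  refine hf.congr' ?_
  filter_upwards [hf.eventually (eventually_lt_nhds hab), hg.eventually_ge_atTop b]
    with x hfx hgx
  exact (min_eq_left (hfx.trans_le hgx).le).symm

lemma logb_one_add_add_le {b x y : ℝ} (hb : 1 < b) (hx : 0 ≤ x) (hy : 0 ≤ y) :
    logb b (1 + (x + y)) ≤ logb b (1 + x) + logb b (1 + y) := by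
  rw [← logb_mul (by positivity) (by positivity)]
  exact logb_le_logb_of_le hb (by positivity) (by nlinarith)

section Logb

variable {ι : Type*} {l : Filter ι}

lemma tendsto_mul_logb_one_add {x : ι → ℝ} {a : ℝ} (b c : ℝ) (hx : Tendsto x l (𝓝 a))
    (ha : 1 + a ≠ 0) :
    Tendsto (fun n => c * logb b (1 + x n)) l (𝓝 (c * logb b (1 + a))) :=
  ((continuousAt_logb ha).tendsto.comp (tendsto_const_nhds.add hx)).const_mul c

lemma tendsto_mul_logb_one_add_atTop {x : ι → ℝ} {b c : ℝ} (hb : 1 < b) (hc : 0 < c)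
    (hx : Tendsto x l atTop) : Tendsto (fun n => c * logb b (1 + x n)) l atTop :=
  ((tendsto_logb_atTop hb).comp (tendsto_atTop_add_const_left l 1 hx)).const_mul_atTop hc

end Logb

section CoefficientLimits

variable {ι : Type*} {l : Filter ι} {τ : ℝ} {pp : ι → ℝ} (hpp : Tendsto pp l (𝓝 0))
include hpp

lemma tendsto_omegaP (β K : ℝ) : Tendsto (fun n => omegaP τ (pp n) β K) l (𝓝 (psiP β K)) := by
  have hc : ContinuousAt (fun p => omegaP τ p β K) 0 := by
    unfold omegaP etaP; fun_prop (disch := simp)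
  convert hc.tendsto.comp hpp using 2 <;> simp [omegaP, etaP, psiP]

lemma tendsto_sigma2P (β K : ℝ) :
    Tendsto (fun n => sigma2P τ (pp n) β K) l (𝓝 (β / (K + 1))) := by
  -- dividing by `K + 1` last avoids needing `K + 1 ≠ 0`
  have hc : ContinuousAt (fun p => sigma2P τ p β K) 0 := by
    simp only [sigma2P, div_mul_eq_div_div]; fun_prop (disch := simp)
  convert hc.tendsto.comp hpp using 2 <;> simp [sigma2P]

lemma tendsto_xiP (b₁ k₁ b₂ k₂ : ℝ) :
    Tendsto (fun n => xiP τ (pp n) b₁ k₁ b₂ k₂) l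
      (𝓝 (b₁ * b₂ / ((k₁ + 1) * (k₂ + 1)) * k₁)) := by
  have hc : ContinuousAt (fun p => xiP τ p b₁ k₁ b₂ k₂) 0 := by
    unfold xiP etaP; fun_prop (disch := simp)
  convert hc.tendsto.comp hpp using 2 <;> simp [xiP, etaP]

end CoefficientLimits

section Rates

variable {ι : Type*} {l : Filter ι} {τ lam Eu : ℝ} {pp pu pr M : ι → ℝ} {N : ℕ}
  (βA βB KA KB : Fin N → ℝ) (i : Fin N)
  (hpp : Tendsto pp l (𝓝 0)) (hpu : Tendsto pu l (𝓝 0))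
include hpp

lemma tendsto_ZP (hpr : Tendsto pr l (𝓝 0)) (j : Fin N) :
    Tendsto (fun n => ZP τ (pp n) (pr n) βA βB KA KB i j) l (𝓝 0) := by
  simpa [ZP] using hpr.mul ((tendsto_xiP hpp _ _ _ _).add (tendsto_xiP hpp _ _ _ _))

lemma tendsto_downlink_denominator (hpr : Tendsto pr l (𝓝 0)) :
    Tendsto (fun n => ∑ j, (omegaP τ (pp n) (βA j) (KA j) + omegaP τ (pp n) (βB j) (KB j)
        + ZP τ (pp n) (pr n) βA βB KA KB i j)) l
      (𝓝 (∑ j, (psiP (βA j) (KA j) + psiP (βB j) (KB j)))) := by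
  simpa using tendsto_finsetSum univ fun j _ =>
    ((tendsto_omegaP hpp _ _).add (tendsto_omegaP hpp _ _)).add
      (tendsto_ZP βA βB KA KB i hpp hpr j)

lemma tendsto_downlink_sinr_atTop (hpr : Tendsto pr l (𝓝 0))
    (hMpr : Tendsto (fun n => M n * pr n) l atTop)
    (hS : 0 < ∑ j, (psiP (βA j) (KA j) + psiP (βB j) (KB j)))
    {β K : ℝ} (hψ : 0 < psiP β K) :
    Tendsto (fun n => M n * pr n * omegaP τ (pp n) β K ^ 2
        / ∑ j, (omegaP τ (pp n) (βA j) (KA j) + omegaP τ (pp n) (βB j) (KB j)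
          + ZP τ (pp n) (pr n) βA βB KA KB i j)) l atTop := by
  simpa only [mul_div_assoc, Pi.div_apply] using hMpr.atTop_mul_pos (by positivity)
    (((tendsto_omegaP hpp β K).pow 2).div (tendsto_downlink_denominator βA βB KA KB i hpp hpr)
      hS.ne')

include hpu

lemma tendsto_qP : Tendsto (fun n => qP τ (pp n) (pu n) βA βB KA KB i) l (𝓝 1) := by
  simpa [qP] using
    ((hpu.mul (tendsto_sigma2P hpp _ _)).add (hpu.mul (tendsto_sigma2P hpp _ _))).add_const 1

lemma tendsto_QP : Tendsto (fun n => QP τ (pp n) (pu n) βA βB KA KB i) l (𝓝 0) := by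
  simpa [QP] using tendsto_finsetSum (univ \ {i}) fun j _ => hpu.mul
    ((((tendsto_xiP hpp _ _ _ _).add (tendsto_xiP hpp _ _ _ _)).add
      (tendsto_xiP hpp _ _ _ _)).add (tendsto_xiP hpp _ _ _ _))

lemma tendsto_uplink_denominator :
    Tendsto (fun n => (omegaP τ (pp n) (βA i) (KA i) + omegaP τ (pp n) (βB i) (KB i))
        * qP τ (pp n) (pu n) βA βB KA KB i + QP τ (pp n) (pu n) βA βB KA KB i) l
      (𝓝 (psiP (βA i) (KA i) + psiP (βB i) (KB i))) := by
  simpa using (((tendsto_omegaP hpp _ _).add (tendsto_omegaP hpp _ _)).mul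
    (tendsto_qP βA βB KA KB i hpp hpu)).add (tendsto_QP βA βB KA KB i hpp hpu)

variable {βA βB KA KB i} (hψA : 0 < psiP (βA i) (KA i)) (hψB : 0 < psiP (βB i) (KB i))
  (hEu : 0 ≤ Eu) (hMpu : Tendsto (fun n => M n * pu n) l (𝓝 Eu))
include hψA hψB hMpu

lemma tendsto_uplink_sinr (β K : ℝ) :
    Tendsto (fun n => M n * pu n * omegaP τ (pp n) β K ^ 2
        / ((omegaP τ (pp n) (βA i) (KA i) + omegaP τ (pp n) (βB i) (KB i))
          * qP τ (pp n) (pu n) βA βB KA KB i + QP τ (pp n) (pu n) βA βB KA KB i)) l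
      (𝓝 (Eu * psiP β K ^ 2 / (psiP (βA i) (KA i) + psiP (βB i) (KB i)))) :=
  (hMpu.mul ((tendsto_omegaP hpp β K).pow 2)).div
    (tendsto_uplink_denominator βA βB KA KB i hpp hpu) (by positivity)

include hEu

lemma tendsto_R1P :
    Tendsto (fun n => R1P lam τ (pp n) (pu n) βA βB KA KB i (M n)) l
      (𝓝 (lam * logb 2 (1 + Eu * (psiP (βA i) (KA i) ^ 2 + psiP (βB i) (KB i) ^ 2)
        / (psiP (βA i) (KA i) + psiP (βB i) (KB i))))) := by
  refine tendsto_mul_logb_one_add 2 lam ?_ (by positivity)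
  convert (tendsto_uplink_sinr hpp hpu hψA hψB hMpu (βA i) (KA i)).add
    (tendsto_uplink_sinr hpp hpu hψA hψB hMpu (βB i) (KB i)) using 2
  · exact add_div _ _ _
  · ring

lemma tendsto_RARP :
    Tendsto (fun n => RARP lam τ (pp n) (pu n) βA βB KA KB i (M n)) l
      (𝓝 (lam * logb 2 (1 + Eu * psiP (βA i) (KA i) ^ 2
        / (psiP (βA i) (KA i) + psiP (βB i) (KB i))))) :=
  tendsto_mul_logb_one_add 2 lam (tendsto_uplink_sinr hpp hpu hψA hψB hMpu _ _) (by positivity)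

lemma tendsto_RBRP :
    Tendsto (fun n => RBRP lam τ (pp n) (pu n) βA βB KA KB i (M n)) l
      (𝓝 (lam * logb 2 (1 + Eu * psiP (βB i) (KB i) ^ 2
        / (psiP (βA i) (KA i) + psiP (βB i) (KB i))))) :=
  tendsto_mul_logb_one_add 2 lam (tendsto_uplink_sinr hpp hpu hψA hψB hMpu _ _) (by positivity)

lemma tendsto_R2P (hlam : 0 < lam) (hpr : Tendsto pr l (𝓝 0))
    (hMpr : Tendsto (fun n => M n * pr n) l atTop)
    (hS : 0 < ∑ j, (psiP (βA j) (KA j) + psiP (βB j) (KB j))) :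
    Tendsto (fun n => R2P lam τ (pp n) (pu n) (pr n) βA βB KA KB i (M n)) l
      (𝓝 (lam * logb 2 (1 + Eu * psiP (βA i) (KA i) ^ 2
          / (psiP (βA i) (KA i) + psiP (βB i) (KB i)))
        + lam * logb 2 (1 + Eu * psiP (βB i) (KB i) ^ 2
          / (psiP (βA i) (KA i) + psiP (βB i) (KB i))))) :=
  ((tendsto_RARP hpp hpu hψA hψB hEu hMpu).min_of_tendsto_atTop
      (tendsto_mul_logb_one_add_atTop one_lt_two hlam
        (tendsto_downlink_sinr_atTop βA βB KA KB i hpp hpr hMpr hS hψB))).add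
    ((tendsto_RBRP hpp hpu hψA hψB hEu hMpu).min_of_tendsto_atTop
      (tendsto_mul_logb_one_add_atTop one_lt_two hlam
        (tendsto_downlink_sinr_atTop βA βB KA KB i hpp hpr hMpr hS hψA)))

end Rates

theorem tendsto_RtotP {ι : Type*} {l : Filter ι} {τ lam Eu : ℝ} {pp pu pr M : ι → ℝ} {N : ℕ}
    {βA βB KA KB : Fin N → ℝ} (i : Fin N) (hlam : 0 < lam) (hEu : 0 ≤ Eu)
    (hβA : ∀ j, 0 < βA j) (hβB : ∀ j, 0 < βB j) (hKA : ∀ j, 0 < KA j) (hKB : ∀ j, 0 < KB j)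
    (hpp : Tendsto pp l (𝓝 0)) (hpu : Tendsto pu l (𝓝 0)) (hpr : Tendsto pr l (𝓝 0))
    (hMpu : Tendsto (fun n => M n * pu n) l (𝓝 Eu))
    (hMpr : Tendsto (fun n => M n * pr n) l atTop) :
    Tendsto (fun n => RtotP lam τ (pp n) (pu n) (pr n) βA βB KA KB i (M n)) l
      (𝓝 (lam * logb 2 (1 + Eu * (psiP (βA i) (KA i) ^ 2 + psiP (βB i) (KB i) ^ 2)
        / (psiP (βA i) (KA i) + psiP (βB i) (KB i))))) := by
  have hψA j : 0 < psiP (βA j) (KA j) := psiP_pos (hβA j) (hKA j)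
  have hψB j : 0 < psiP (βB j) (KB j) := psiP_pos (hβB j) (hKB j)
  have hS : 0 < ∑ j, (psiP (βA j) (KA j) + psiP (βB j) (KB j)) :=
    sum_pos (fun j _ => add_pos (hψA j) (hψB j)) ⟨i, mem_univ i⟩
  have hle : lam * logb 2 (1 + Eu * (psiP (βA i) (KA i) ^ 2 + psiP (βB i) (KB i) ^ 2)
        / (psiP (βA i) (KA i) + psiP (βB i) (KB i)))
      ≤ lam * logb 2 (1 + Eu * psiP (βA i) (KA i) ^ 2
          / (psiP (βA i) (KA i) + psiP (βB i) (KB i)))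
        + lam * logb 2 (1 + Eu * psiP (βB i) (KB i) ^ 2
          / (psiP (βA i) (KA i) + psiP (βB i) (KB i))) := by
    rw [← mul_add, mul_add Eu, add_div]
    have := hψA i; have := hψB i
    exact mul_le_mul_of_nonneg_left
      (logb_one_add_add_le one_lt_two (by positivity) (by positivity)) hlam.le
  have h := (tendsto_R1P (lam := lam) (τ := τ) hpp hpu (hψA i) (hψB i) hEu hMpu).min
    (tendsto_R2P (τ := τ) hpp hpu (hψA i) (hψB i) hEu hMpu hlam hpr hMpr hS)
  rwa [min_eq_left hle] at h

lemma tendsto_const_div_natCast_rpow (c : ℝ) {a : ℝ} (ha : 0 < a) :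
    Tendsto (fun M : ℕ => c / (M : ℝ) ^ a) atTop (𝓝 0) :=
  tendsto_const_nhds.div_atTop ((tendsto_rpow_atTop ha).comp tendsto_natCast_atTop_atTop)

lemma natCast_mul_const_div_rpow_eventuallyEq (c a : ℝ) :
    (fun M : ℕ => (M : ℝ) * (c / (M : ℝ) ^ a)) =ᶠ[atTop] fun M => c * (M : ℝ) ^ (1 - a) := by
  filter_upwards [eventually_gt_atTop 0] with M hM
  have hM' : (0 : ℝ) < M := by exact_mod_cast hM
  rw [rpow_sub hM', rpow_one]
  field_simp

theorem power_scaling_case_II_general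
    (N : ℕ) (i : Fin N) (T τ : ℝ) (hτ : 0 < τ) (hT : τ < T)
    (lam : ℝ) (hlam : lam = (T - τ) / (2 * T))
    (Eu Er Ep : ℝ) (hEu : 0 < Eu) (hEr : 0 < Er)
    (βA βB KA KB : Fin N → ℝ)
    (hβA : ∀ j, 0 < βA j) (hβB : ∀ j, 0 < βB j)
    (hKA : ∀ j, 0 < KA j) (hKB : ∀ j, 0 < KB j)
    (α ε γ : ℝ) (hα : α = 1) (hε0 : 0 < ε) (hε1 : ε < 1) (hγ : 0 < γ)
    (psiA psiB : Fin N → ℝ)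
    (hpsiA : ∀ j, psiA j = βA j * KA j / (KA j + 1))
    (hpsiB : ∀ j, psiB j = βB j * KB j / (KB j + 1)) :
    Tendsto (fun M : ℕ =>
        RtotP lam τ (Ep / (M : ℝ) ^ γ) (Eu / (M : ℝ) ^ α) (Er / (M : ℝ) ^ ε)
          βA βB KA KB i (M : ℝ))
      atTop
      (𝓝 (lam * logb 2 (1 + Eu * ((psiA i) ^ 2 + (psiB i) ^ 2) / (psiA i + psiB i)))) := by
  subst hα
  obtain rfl : psiA = fun j => psiP (βA j) (KA j) := funext hpsiA
  obtain rfl : psiB = fun j => psiP (βB j) (KB j) := funext hpsiB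
  have hlam0 : 0 < lam := by rw [hlam]; exact div_pos (by linarith) (by linarith)
  have hMpu : Tendsto (fun M : ℕ => (M : ℝ) * (Eu / (M : ℝ) ^ (1 : ℝ))) atTop (𝓝 Eu) := by
    refine tendsto_const_nhds.congr' ?_
    filter_upwards [natCast_mul_const_div_rpow_eventuallyEq Eu 1] with M hM
    rw [hM, sub_self, rpow_zero, mul_one]
  have hMpr : Tendsto (fun M : ℕ => (M : ℝ) * (Er / (M : ℝ) ^ ε)) atTop atTop :=
    (((tendsto_rpow_atTop (sub_pos.2 hε1)).comp tendsto_natCast_atTop_atTop).const_mul_atTop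
      hEr).congr' (natCast_mul_const_div_rpow_eventuallyEq Er ε).symm
  exact tendsto_RtotP i hlam0 hEu.le hβA hβB hKA hKB (tendsto_const_div_natCast_rpow Ep hγ)
    (tendsto_const_div_natCast_rpow Eu one_pos) (tendsto_const_div_natCast_rpow Er hε0) hMpu hMpr

/-- Power-scaling Case II: if `α = 1`, `0 < ε < 1` and `γ > 0` then
`R̃_i(M) → λ·log₂(1 + E_u·(ψ_{AR,i}² + ψ_{BR,i}²)/(ψ_{AR,i} + ψ_{BR,i}))`:
the asymptotic SE is determined by the uplink phase and is independent of `E_r`. -/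
theorem power_scaling_case_II
    (N : ℕ) (hN : 1 ≤ N) (i : Fin N) (T τ : ℝ) (hτ : 0 < τ) (hT : τ < T)
    (lam : ℝ) (hlam : lam = (T - τ) / (2 * T))
    (Eu Er Ep : ℝ) (hEu : 0 < Eu) (hEr : 0 < Er) (hEp : 0 < Ep)
    (βA βB KA KB : Fin N → ℝ)
    (hβA : ∀ j, 0 < βA j) (hβB : ∀ j, 0 < βB j)
    (hKA : ∀ j, 0 < KA j) (hKB : ∀ j, 0 < KB j)
    (α ε γ : ℝ) (hα : α = 1) (hε0 : 0 < ε) (hε1 : ε < 1) (hγ : 0 < γ)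
    (psiA psiB : Fin N → ℝ)
    (hpsiA : ∀ j, psiA j = βA j * KA j / (KA j + 1))
    (hpsiB : ∀ j, psiB j = βB j * KB j / (KB j + 1)) :
    Tendsto (fun M : ℕ =>
        RtotP lam τ (Ep / (M : ℝ) ^ γ) (Eu / (M : ℝ) ^ α) (Er / (M : ℝ) ^ ε)
          βA βB KA KB i (M : ℝ))
      atTop
      (𝓝 (lam * logb 2 (1 + Eu * ((psiA i) ^ 2 + (psiB i) ^ 2) / (psiA i + psiB i)))) :=
  power_scaling_case_II_general N i T τ hτ hT lam hlam Eu Er Ep hEu hEr βA βB KA KB hβA hβB hKA hKB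
    α ε γ hα hε0 hε1 hγ psiA psiB hpsiA hpsiB
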